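/- Let W be a standard Brownian motion, and fix μ ∈ ℝ, σ > 0, a confidence level η ∈ (0,1), and ε ∈ (0,1). Then almost surely the following holds: for every solution Q of the one-armed Thompson sampling limit ODE driven by the path W(ω) with parameters (μ, σ, 0), defining the sampling probability π(t) = Φ((μ·Q(t) + W_{Q(t)}(ω)) / (σ·√(Q(t)))) for t ∈ (0, ε), one has sup_{t ∈ (0,ε)} π(t) ≥ 1 − η and inf_{t ∈ (0,ε)} π(t) ≤ η. -/

import Mathlib

open MeasureTheory ProbabilityTheory Filter Set

/-- The standard normal distribution function `Φ`. -/
noncomputable def Phi (x : ℝ) : ℝ :=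
  ∫ s in Set.Iic x, (Real.sqrt (2 * Real.pi))⁻¹ * Real.exp (-s ^ 2 / 2)

/-- `W` is a standard Brownian motion under `P`: continuous sample paths, `W₀ = 0`,
Gaussian increments `W_t - W_s ~ N(0, t - s)`, and independent increments. -/
def IsStdBM {Ω : Type*} [MeasurableSpace Ω] (P : Measure Ω) (W : ℝ → Ω → ℝ) : Prop :=
  (∀ ω, Continuous fun t => W t ω) ∧
  (∀ ω, W 0 ω = 0) ∧
  (∀ s t : ℝ, 0 ≤ s → s < t →
    Measure.map (fun ω => W t ω - W s ω) P = gaussianReal 0 (Real.toNNReal (t - s))) ∧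
  (∀ (n : ℕ) (t : Fin (n + 1) → ℝ), (∀ i, 0 ≤ t i) → StrictMono t →
    iIndepFun
      (fun i : Fin n => fun ω => W (t i.succ) ω - W (t i.castSucc) ω) P)

/-- A solution of the one-armed Thompson sampling limit ODE driven by `w`
with parameters `(μ, σ, c)`: a continuous nondecreasing `Q : [0,1] → ℝ` with `Q 0 = 0`,
`Q t > 0` on `(0,1]`, differentiable on `(0,1]` with
`Q'(t) = Φ((μ Q t + w (Q t)) / (σ √(Q t + σ² c)))`. -/
def IsOneArmSol (w : ℝ → ℝ) (μ σ c : ℝ) (Q : ℝ → ℝ) : Prop :=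
  ContinuousOn Q (Set.Icc 0 1) ∧ MonotoneOn Q (Set.Icc 0 1) ∧ Q 0 = 0 ∧
  (∀ t ∈ Set.Ioc (0:ℝ) 1, 0 < Q t) ∧
  (∀ t ∈ Set.Ioc (0:ℝ) 1,
    HasDerivWithinAt Q
      (Phi ((μ * Q t + w (Q t)) / (σ * Real.sqrt (Q t + σ ^ 2 * c)))) (Set.Icc 0 1) t)

/-!
A solution `Q` is continuous with `Q 0 = 0 < Q ε`, so `Q '' (0, ε)` contains `(0, Q ε)` and it
suffices that almost surely `W_y / √y` is unbounded above as `y ↓ 0` (and, applying this to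
`-W`, unbounded below), for then the argument of `Φ` takes arbitrarily large values of both
signs. To see this, pick `y_n ↓ 0` with `y_n / y_{n+1}` growing fast. The increments
`W_{y_n} - W_{y_{n+1}}` are independent and each exceeds `2k√y_n` with probability bounded
below, so this happens infinitely often; by Borel–Cantelli, `W_{y_{n+1}} > -k√y_n` eventually.
-/

open scoped NNReal ENNReal Topology

lemma Phi_eq_cdf : Phi = cdf (gaussianReal 0 1) := by
  ext x
  rw [cdf_eq_real, measureReal_def, gaussianReal_apply_eq_integral 0 one_ne_zero,
    ENNReal.toReal_ofReal (setIntegral_nonneg measurableSet_Iic fun s _ =>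
      gaussianPDFReal_nonneg 0 1 s)]
  simp [Phi, gaussianPDFReal]

lemma Phi_nonneg (x : ℝ) : 0 ≤ Phi x := Phi_eq_cdf ▸ cdf_nonneg _ x

lemma Phi_le_one (x : ℝ) : Phi x ≤ 1 := Phi_eq_cdf ▸ cdf_le_one _ x

lemma monotone_Phi : Monotone Phi := Phi_eq_cdf ▸ monotone_cdf _

lemma tendsto_Phi_atTop : Tendsto Phi atTop (𝓝 1) := Phi_eq_cdf ▸ tendsto_cdf_atTop _

lemma tendsto_Phi_atBot : Tendsto Phi atBot (𝓝 0) := Phi_eq_cdf ▸ tendsto_cdf_atBot _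

lemma ofReal_Phi (x : ℝ) : ENNReal.ofReal (Phi x) = gaussianReal 0 1 (Iic x) :=
  Phi_eq_cdf ▸ ofReal_cdf _ x

lemma Phi_pos (x : ℝ) : 0 < Phi x := by
  refine ENNReal.ofReal_pos.1 ((ofReal_Phi x).symm ▸ pos_iff_ne_zero.2 fun h => ?_)
  simpa using gaussianReal_absolutelyContinuous' 0 one_ne_zero h

lemma Phi_neg (x : ℝ) : Phi (-x) = 1 - Phi x := by
  have hsymm : (gaussianReal 0 1).map Neg.neg = gaussianReal 0 1 := by
    simpa using gaussianReal_map_neg (μ := 0) (v := 1)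
  have := nullSingletonClass_gaussianReal (μ := 0) one_ne_zero
  have : gaussianReal 0 1 (Iic (-x)) = gaussianReal 0 1 (Iic x)ᶜ := by
    calc gaussianReal 0 1 (Iic (-x)) = gaussianReal 0 1 (Neg.neg ⁻¹' Iic (-x)) := by
          rw [← Measure.map_apply measurable_neg measurableSet_Iic, hsymm]
      _ = gaussianReal 0 1 (Ici x) := by congr 1; ext; simp
      _ = gaussianReal 0 1 (Iic x)ᶜ := by
          rw [compl_Iic]; exact measure_congr Ioi_ae_eq_Ici.symm
  rw [Phi_eq_cdf, cdf_eq_real, cdf_eq_real, measureReal_def, this,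
    prob_compl_eq_one_sub measurableSet_Iic,
    ENNReal.toReal_sub_of_le prob_le_one ENNReal.one_ne_top]
  simp [measureReal_def]

lemma Phi_lt_one (x : ℝ) : Phi x < 1 := by
  have := Phi_neg (-x)
  rw [neg_neg] at this
  linarith [Phi_pos (-x)]

section Probability

variable {Ω : Type*} [MeasurableSpace Ω] {P : Measure Ω}

lemma measure_preimage_Iic_of_map_eq_gaussianReal {X : Ω → ℝ} {v : ℝ≥0} (hv : v ≠ 0)
    (hX : P.map X = gaussianReal 0 v) (c : ℝ) :
    P (X ⁻¹' Iic c) = ENNReal.ofReal (Phi (c / √v)) := by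
  have hXm : AEMeasurable X P := aemeasurable_of_map_neZero (by rw [hX]; infer_instance)
  have hsqrt : 0 < √(v : ℝ) := Real.sqrt_pos.2 (NNReal.coe_pos.2 (pos_iff_ne_zero.2 hv))
  have hscale : (gaussianReal 0 1).map (√(v : ℝ) * ·) = gaussianReal 0 v := by
    rw [gaussianReal_map_const_mul]
    congr 1 <;> simp
  rw [← Measure.map_apply_of_aemeasurable hXm measurableSet_Iic, hX, ← hscale,
    Measure.map_apply (measurable_const_mul _) measurableSet_Iic, ofReal_Phi]
  congr 1
  ext y
  simp [le_div_iff₀ hsqrt, mul_comm]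

lemma ae_frequently_notMem_of_measure_iInter_le {s : ℕ → Set Ω} {q : ℝ≥0∞} (hq : q < 1)
    (h : ∀ N M, P (⋂ i : Fin M, s (N + i)) ≤ q ^ M) :
    ∀ᵐ ω ∂P, ∃ᶠ n in atTop, ω ∉ s n := by
  simp only [ae_iff, not_frequently, not_not]
  refine measure_mono_null (t := ⋃ N, ⋂ i : ℕ, s (N + i)) (fun ω hω => ?_)
    (measure_iUnion_null fun N => ?_)
  · obtain ⟨N, hN⟩ := eventually_atTop.1 hω
    exact mem_iUnion.2 ⟨N, mem_iInter.2 fun i => hN _ (Nat.le_add_right N i)⟩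
  · refine le_zero_iff.1 (ge_of_tendsto' (ENNReal.tendsto_pow_atTop_nhds_zero_of_lt_one hq)
      fun M => (measure_mono ?_).trans (h N M))
    exact iInter_mono' fun i => ⟨i, subset_rfl⟩

lemma exists_seq_ofReal_Phi_le {k : ℝ} (hk : 0 < k) :
    ∃ x : ℕ → ℝ, (∀ n, 0 < x n) ∧ (∀ n, 2 * x (n + 1) ≤ x n) ∧ Tendsto x atTop (𝓝 0) ∧
      ∀ n, ENNReal.ofReal (Phi (-(k * √(x n / x (n + 1))))) ≤ 2⁻¹ ^ n := by
  have hlim : Tendsto (fun r => ENNReal.ofReal (Phi (-(k * √r)))) atTop (𝓝 0) := by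
    simpa using ENNReal.tendsto_ofReal (tendsto_Phi_atBot.comp
      (tendsto_neg_atTop_atBot.comp (Real.tendsto_sqrt_atTop.const_mul_atTop hk)))
  have hratio : ∀ n : ℕ, ∃ r : ℝ, ENNReal.ofReal (Phi (-(k * √r))) ≤ 2⁻¹ ^ n ∧ 2 ≤ r :=
    fun n => ((hlim.eventually (ge_mem_nhds (ENNReal.pow_pos (by simp) n))).and
      (eventually_ge_atTop 2)).exists
  choose ρ hρ hρ2 using hratio
  set x : ℕ → ℝ := fun n => ∏ i ∈ Finset.range n, (ρ i)⁻¹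
  have hρ0 (n : ℕ) : 0 < ρ n := by linarith [hρ2 n]
  have hx0 (n : ℕ) : 0 < x n := Finset.prod_pos fun i _ => inv_pos.2 (hρ0 i)
  have hsucc (n : ℕ) : x (n + 1) = x n / ρ n := by
    simp only [x, Finset.prod_range_succ, div_eq_mul_inv]
  have hx_le (n : ℕ) : x n ≤ 2⁻¹ ^ n := by
    simpa [x] using Finset.prod_le_prod (s := Finset.range n)
      (fun i _ => (inv_pos.2 (hρ0 i)).le) fun i _ => inv_anti₀ two_pos (hρ2 i)
  refine ⟨x, hx0, fun n => ?_, ?_, fun n => ?_⟩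
  · rw [hsucc, mul_div_assoc', div_le_iff₀ (hρ0 n)]
    nlinarith [hx0 n, hρ2 n]
  · exact squeeze_zero (fun n => (hx0 n).le) hx_le
      (tendsto_pow_atTop_nhds_zero_of_lt_one (by norm_num) (by norm_num))
  · rw [hsucc, div_div_cancel₀ (hx0 n).ne']
    exact hρ n

namespace IsStdBM

variable {W : ℝ → Ω → ℝ}

lemma map_eq (hW : IsStdBM P W) {t : ℝ} (ht : 0 < t) :
    P.map (W t) = gaussianReal 0 t.toNNReal := by
  simpa [hW.2.1] using hW.2.2.1 0 t le_rfl ht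

lemma neg (hW : IsStdBM P W) : IsStdBM P (fun t ω => -W t ω) := by
  obtain ⟨hcont, hzero, hinc, hind⟩ := hW
  refine ⟨fun ω => (hcont ω).neg, fun ω => by simp [hzero ω], fun s t hs hst => ?_,
    fun n t ht hmono => ?_⟩
  · have hm : AEMeasurable (fun ω => W t ω - W s ω) P :=
      aemeasurable_of_map_neZero (by rw [hinc s t hs hst]; infer_instance)
    have : (fun ω => -W t ω - -W s ω) = (fun x => -x) ∘ (fun ω => W t ω - W s ω) := by
      ext; simp; ring
    rw [this, ← AEMeasurable.map_map_of_aemeasurable measurable_neg.aemeasurable hm,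
      hinc s t hs hst, gaussianReal_map_neg, neg_zero]
  · convert (hind n t ht hmono).comp (fun _ x => -x) (fun _ => measurable_neg) using 2
    ext; simp; ring

lemma iIndepFun_increments (hW : IsStdBM P W) {x : ℕ → ℝ} (hx : StrictAnti x)
    (hx0 : ∀ n, 0 ≤ x n) (N M : ℕ) :
    iIndepFun (fun i : Fin M => fun ω => W (x (N + i)) ω - W (x (N + i + 1)) ω) P := by
  have hmono : StrictMono fun j : Fin (M + 1) => x (N + (M - j)) :=
    fun i j hij => hx (by omega)
  convert (hW.2.2.2 M _ (fun j => hx0 (N + (M - j))) hmono).precomp Fin.rev_injective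
    using 3 with i
  simp only [Fin.val_succ, Fin.val_castSucc, Fin.val_rev]
  have := i.isLt
  rw [show N + (M - (M - (i + 1) + 1)) = N + i by omega,
    show N + (M - (M - (i + 1))) = N + i + 1 by omega]

lemma ae_frequently_mul_sqrt_lt_increment (hW : IsStdBM P W) {x : ℕ → ℝ}
    (hx0 : ∀ n, 0 < x n) (hx : ∀ n, 2 * x (n + 1) ≤ x n) {k : ℝ} (hk : 0 ≤ k) :
    ∀ᵐ ω ∂P, ∃ᶠ n in atTop, 2 * k * √(x n) < W (x n) ω - W (x (n + 1)) ω := by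
  have hanti : StrictAnti x :=
    strictAnti_nat_of_succ_lt fun n => by linarith [hx0 (n + 1), hx n]
  set s : ℕ → Set Ω :=
    fun n => (fun ω => W (x n) ω - W (x (n + 1)) ω) ⁻¹' Iic (2 * k * √(x n))
  have hs (n : ℕ) : P (s n) ≤ ENNReal.ofReal (Phi (2 * k * √2)) := by
    have hgap : 0 < x n - x (n + 1) := sub_pos.2 (hanti n.lt_succ_self)
    rw [measure_preimage_Iic_of_map_eq_gaussianReal (by simpa using hgap)
      (hW.2.2.1 _ _ (hx0 _).le (hanti n.lt_succ_self)), Real.coe_toNNReal _ hgap.le,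
      mul_div_assoc, ← Real.sqrt_div' _ hgap.le]
    refine ENNReal.ofReal_le_ofReal (monotone_Phi ?_)
    gcongr
    rw [div_le_iff₀ hgap]
    linarith [hx n]
  have hindep (N M : ℕ) :
      P (⋂ i : Fin M, s (N + i)) ≤ ENNReal.ofReal (Phi (2 * k * √2)) ^ M := by
    rw [(hW.iIndepFun_increments hanti (fun n => (hx0 n).le) N M).meas_iInter
      fun i => ⟨_, measurableSet_Iic, rfl⟩]
    simpa using Finset.prod_le_pow_card Finset.univ (fun i : Fin M => P (s (N + i))) _
      fun i _ => hs (N + i)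
  filter_upwards [ae_frequently_notMem_of_measure_iInter_le
    (ENNReal.ofReal_lt_one.2 (Phi_lt_one _)) hindep] with ω hω
  exact hω.mono fun n hn => not_le.1 hn

lemma ae_eventually_neg_mul_sqrt_lt (hW : IsStdBM P W) {x : ℕ → ℝ} (hx0 : ∀ n, 0 < x n)
    {k : ℝ} (hx : ∀ n, ENNReal.ofReal (Phi (-(k * √(x n / x (n + 1))))) ≤ 2⁻¹ ^ n) :
    ∀ᵐ ω ∂P, ∀ᶠ n in atTop, -(k * √(x n)) < W (x (n + 1)) ω := by
  have hs (n : ℕ) : P (W (x (n + 1)) ⁻¹' Iic (-(k * √(x n)))) ≤ 2⁻¹ ^ n := by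
    rw [measure_preimage_Iic_of_map_eq_gaussianReal (by simpa using hx0 (n + 1))
      (hW.map_eq (hx0 (n + 1))), Real.coe_toNNReal _ (hx0 (n + 1)).le, neg_div, mul_div_assoc,
      ← Real.sqrt_div' _ (hx0 (n + 1)).le]
    exact hx n
  have hsum : ∑' n, P (W (x (n + 1)) ⁻¹' Iic (-(k * √(x n)))) ≠ ⊤ :=
    ne_top_of_le_ne_top (by simp [ENNReal.tsum_geometric]) (ENNReal.tsum_le_tsum hs)
  filter_upwards [ae_eventually_notMem hsum] with ω hω
  exact hω.mono fun n hn => by simpa using hn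

theorem ae_frequently_mul_sqrt_le (hW : IsStdBM P W) :
    ∀ᵐ ω ∂P, ∀ k : ℝ, ∃ᶠ y in 𝓝[>] 0, k * √y ≤ W y ω := by
  have hnat (K : ℕ) : ∀ᵐ ω ∂P, ∃ᶠ y in 𝓝[>] 0, (K + 1 : ℝ) * √y ≤ W y ω := by
    obtain ⟨x, hx0, hhalf, hlim, hPhi⟩ := exists_seq_ofReal_Phi_le (k := K + 1) (by positivity)
    have hxlim : Tendsto x atTop (𝓝[>] 0) :=
      tendsto_nhdsWithin_iff.2 ⟨hlim, Eventually.of_forall hx0⟩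
    filter_upwards [hW.ae_frequently_mul_sqrt_lt_increment hx0 hhalf (k := K + 1)
      (by positivity), hW.ae_eventually_neg_mul_sqrt_lt hx0 hPhi] with ω hinc hlow
    exact hxlim.frequently ((hinc.and_eventually hlow).mono fun n ⟨h₁, h₂⟩ => by linarith)
  filter_upwards [ae_all_iff.2 hnat] with ω hω k
  obtain ⟨K, hK⟩ := exists_nat_ge k
  exact (hω K).mono fun y hy =>
    (mul_le_mul_of_nonneg_right (by linarith) (Real.sqrt_nonneg y)).trans hy

end IsStdBM

end Probability

lemma frequently_le_Phi {w : ℝ → ℝ} (hw : ∀ k : ℝ, ∃ᶠ y in 𝓝[>] 0, k * √y ≤ w y) (μ : ℝ)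
    {σ : ℝ} (hσ : 0 < σ) {a : ℝ} (ha : a < 1) :
    ∃ᶠ y in 𝓝[>] 0, a ≤ Phi ((μ * y + w y) / (σ * √y)) := by
  obtain ⟨z, hz⟩ := eventually_atTop.1 (tendsto_Phi_atTop.eventually (lt_mem_nhds ha))
  refine ((hw (σ * z + |μ|)).and_eventually (Ioo_mem_nhdsGT one_pos)).mono
    fun y ⟨hwy, hy0, hy1⟩ => (hz _ ?_).le
  have hsqrt : 0 < √y := Real.sqrt_pos.2 hy0
  have hy_le : y ≤ √y := Real.le_sqrt_of_sq_le (by nlinarith)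
  have hdrift : -(|μ| * √y) ≤ μ * y := by
    nlinarith [neg_abs_le μ, abs_nonneg μ]
  rw [le_div_iff₀ (by positivity)]
  linarith

lemma IsOneArmSol.exists_mem_Ioo_of_frequently {w : ℝ → ℝ} {μ σ c : ℝ} {Q : ℝ → ℝ}
    (hQ : IsOneArmSol w μ σ c Q) {ε : ℝ} (hε0 : 0 < ε) (hε1 : ε ≤ 1) {p : ℝ → Prop}
    (hp : ∃ᶠ y in 𝓝[>] 0, p y) : ∃ t ∈ Ioo 0 ε, p (Q t) := by
  obtain ⟨hcont, -, hQ0, hpos, -⟩ := hQ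
  have hivt : Ioo (Q 0) (Q ε) ⊆ Q '' Ioo 0 ε :=
    intermediate_value_Ioo hε0.le (hcont.mono (Icc_subset_Icc_right hε1))
  rw [hQ0] at hivt
  obtain ⟨y, hpy, hy⟩ := (hp.and_eventually (Ioo_mem_nhdsGT (hpos ε ⟨hε0, hε1⟩))).exists
  obtain ⟨t, ht, rfl⟩ := hivt hy
  exact ⟨t, ht, hpy⟩

/-- Instability of undersmoothed Thompson sampling: almost surely, for any solution `Q`
of the `c = 0` one-armed ODE, the sampling probability
`π(t) = Φ((μ Q t + W_{Q t}) / (σ √(Q t)))` attains values at least `1 - η` and at most `η`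
on every initial time interval `(0, ε)`. -/
theorem one_arm_instability {Ω : Type*} [MeasurableSpace Ω] (P : Measure Ω)
    (W : ℝ → Ω → ℝ) (hW : IsStdBM P W) (μ σ η ε : ℝ) (hσ : 0 < σ)
    (hη : η ∈ Set.Ioo (0 : ℝ) 1) (hε : ε ∈ Set.Ioo (0 : ℝ) 1) :
    ∀ᵐ ω ∂P, ∀ Q : ℝ → ℝ,
      IsOneArmSol (fun x => W x ω) μ σ 0 Q →
      1 - η ≤ sSup ((fun t => Phi ((μ * Q t + W (Q t) ω) / (σ * Real.sqrt (Q t)))) ''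
          Set.Ioo 0 ε) ∧
      sInf ((fun t => Phi ((μ * Q t + W (Q t) ω) / (σ * Real.sqrt (Q t)))) ''
          Set.Ioo 0 ε) ≤ η := by
  filter_upwards [hW.ae_frequently_mul_sqrt_le, hW.neg.ae_frequently_mul_sqrt_le]
    with ω hup hdown Q hQ
  have ha : 1 - η < 1 := by linarith [hη.1]
  constructor
  · obtain ⟨t, ht, hπ⟩ := hQ.exists_mem_Ioo_of_frequently hε.1 hε.2.le
      (frequently_le_Phi hup μ hσ ha)
    exact hπ.trans (le_csSup ⟨1, forall_mem_image.2 fun _ _ => Phi_le_one _⟩ ⟨t, ht, rfl⟩)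
  · obtain ⟨t, ht, hπ⟩ := hQ.exists_mem_Ioo_of_frequently hε.1 hε.2.le
      (frequently_le_Phi hdown (-μ) hσ ha)
    rw [show (-μ * Q t + -W (Q t) ω) / (σ * √(Q t))
        = -((μ * Q t + W (Q t) ω) / (σ * √(Q t))) by ring, Phi_neg] at hπ
    exact (csInf_le ⟨0, forall_mem_image.2 fun _ _ => Phi_nonneg _⟩ ⟨t, ht, rfl⟩).trans
      (by linarith)
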